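/- arXiv:1909.00418 — 2 statements merged into one kernel-verified Lean document; each statement's English description precedes it below -/
import Mathlib

section
/- There exists a p-family; that is, there exists a function p assigning to every balanced pair (v,w) of binary sequences an element of the field F = ℚ(q,a,t) satisfying the five recursion rules (1)–(5). -/
/-!
Rules (2)–(5), read from left to right, define `p` by recursion on the last letters of `v`
and `w`: rules (2)–(4) shorten the pair, and rule (5) keeps its length but shortens the
final run of zeros of `v·0`, as long as `v` contains a one. When it does not, neither does
`w`, so `0·v = v·0`, `0·w = w·0`, and rule (5) with `l = 0` reads
`p(v·0, w·0) = p(1·v, 1·w) + q·p(v·0, w·0)`; it is solved for `p(v·0, w·0)` instead, which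
is possible as `q ≠ 1`. The recursion runs on the reversed sequences, so that it peels off
heads of lists.
-/

open MvPolynomial

noncomputable section

/-- The field `F = ℚ(q,a,t)` of rational functions in three variables over `ℚ`. -/
abbrev KRF : Type := FractionRing (MvPolynomial (Fin 3) ℚ)

/-- The variable `q` in `F`. -/
def fq : KRF := algebraMap (MvPolynomial (Fin 3) ℚ) KRF (X 0)
/-- The variable `a` in `F`. -/
def fa : KRF := algebraMap (MvPolynomial (Fin 3) ℚ) KRF (X 1)
/-- The variable `t` in `F`. -/
def ft : KRF := algebraMap (MvPolynomial (Fin 3) ℚ) KRF (X 2)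

/-- The number `|v|` of ones in a binary sequence. -/
def onesCt (v : List Bool) : ℕ := v.count true

/-- A p-family: a function on (balanced) pairs of binary sequences with values in
`F = ℚ(q,a,t)` satisfying the five recursion rules (1)-(5). -/
def IsPFamily (p : List Bool → List Bool → KRF) : Prop :=
  (∀ n : ℕ, p [] (List.replicate n false) = ((1 + fa) / (1 - fq)) ^ n) ∧
  (∀ m : ℕ, p (List.replicate m false) [] = ((1 + fa) / (1 - fq)) ^ m) ∧
  (∀ v w : List Bool, onesCt v = onesCt w →
      p (v ++ [true]) (w ++ [true]) = (ft ^ onesCt v + fa) * p v w) ∧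
  (∀ v w : List Bool, onesCt v = onesCt w + 1 →
      p (v ++ [false]) (w ++ [true]) = p v (true :: w)) ∧
  (∀ v w : List Bool, onesCt v + 1 = onesCt w →
      p (v ++ [true]) (w ++ [false]) = p (true :: v) w) ∧
  (∀ v w : List Bool, onesCt v = onesCt w →
      p (v ++ [false]) (w ++ [false]) =
        ft ^ (-(onesCt v : ℤ)) * p (true :: v) (true :: w) +
          fq * ft ^ (-(onesCt v : ℤ)) * p (false :: v) (false :: w))

namespace List

theorem idxOf_append_singleton_self {α : Type*} [BEq α] [LawfulBEq α] (a : α) (l : List α) :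
    (l ++ [a]).idxOf a = l.idxOf a := by
  by_cases h : a ∈ l
  · exact idxOf_append_of_mem h
  · rw [idxOf_append_of_notMem h, idxOf_of_notMem h, idxOf_cons_self, add_zero]

theorem append_singleton_eq_cons_of_forall_eq {α : Type*} {a : α} {l : List α}
    (h : ∀ b ∈ l, b = a) : l ++ [a] = a :: l := by
  rw [eq_replicate_of_mem h, ← replicate_succ', replicate_succ]

end List

theorem one_sub_fq_ne_zero : (1 : KRF) - fq ≠ 0 := by
  rw [fq, ← map_one (algebraMap (MvPolynomial (Fin 3) ℚ) KRF), ← map_sub,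
    map_ne_zero_iff _ (IsFractionRing.injective _ _)]
  intro h
  simpa using congrArg constantCoeff h

def revPFamily : List Bool → List Bool → KRF
  | [], w => ((1 + fa) / (1 - fq)) ^ w.length
  | _ :: v, [] => ((1 + fa) / (1 - fq)) ^ (v.length + 1)
  | true :: v, true :: w => (ft ^ v.count true + fa) * revPFamily v w
  | false :: v, true :: w => revPFamily v (w ++ [true])
  | true :: v, false :: w => revPFamily (v ++ [true]) w
  | false :: v, false :: w =>
      if true ∈ v then
        ft ^ (-(v.count true : ℤ)) * revPFamily (v ++ [true]) (w ++ [true]) +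
          fq * ft ^ (-(v.count true : ℤ)) * revPFamily (v ++ [false]) (w ++ [false])
      else revPFamily (v ++ [true]) (w ++ [true]) / (1 - fq)
termination_by v w => (v.length + w.length, v.idxOf true)
decreasing_by
  all_goals simp_wf
  all_goals first
    | exact Prod.Lex.left _ _ (by omega)
    | exact Prod.Lex.right _ (by rw [List.idxOf_append_singleton_self]; omega)
    | exact Prod.Lex.right _ (by rw [List.idxOf_append_of_mem ‹_›]; omega)

def pFamily (v w : List Bool) : KRF := revPFamily v.reverse w.reverse

theorem revPFamily_nil_right (v : List Bool) :
    revPFamily v [] = ((1 + fa) / (1 - fq)) ^ v.length := by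
  cases v <;> simp [revPFamily]

theorem pFamily_append_false_append_false {v w : List Bool} (h : onesCt v = onesCt w) :
    pFamily (v ++ [false]) (w ++ [false]) =
      ft ^ (-(onesCt v : ℤ)) * pFamily (true :: v) (true :: w) +
        fq * ft ^ (-(onesCt v : ℤ)) * pFamily (false :: v) (false :: w) := by
  simp only [pFamily, onesCt, List.reverse_append, List.reverse_cons, List.reverse_nil,
    List.nil_append, List.singleton_append]
  by_cases hv : true ∈ v
  · rw [revPFamily, if_pos (List.mem_reverse.2 hv), List.count_reverse]
  · have hw : true ∉ w := by rwa [← List.count_eq_zero, ← onesCt, ← h, onesCt, List.count_eq_zero]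
    have hzeros (u : List Bool) (hu : true ∉ u) : u.reverse ++ [false] = false :: u.reverse :=
      List.append_singleton_eq_cons_of_forall_eq (by simpa using hu)
    rw [hzeros v hv, hzeros w hw, List.count_eq_zero.2 hv, Nat.cast_zero, neg_zero, zpow_zero,
      revPFamily, if_neg (by simpa using hv)]
    have := one_sub_fq_ne_zero
    field_simp
    ring

theorem isPFamily_pFamily : IsPFamily pFamily := by
  refine ⟨fun n => ?_, fun m => ?_, fun v w _ => ?_, fun v w _ => ?_, fun v w _ => ?_,
    fun v w => pFamily_append_false_append_false⟩
  · simp [pFamily, revPFamily]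
  · simp [pFamily, revPFamily_nil_right]
  · simp [pFamily, revPFamily, onesCt]
  · simp [pFamily, revPFamily]
  · simp [pFamily, revPFamily]

/-- There exists a p-family. -/
theorem exists_pFamily : ∃ p : List Bool → List Bool → KRF, IsPFamily p :=
  ⟨pFamily, isPFamily_pFamily⟩
end
end

section
/- The p-family is symmetric: for every balanced pair (v,w) of binary sequences, p(v,w) = p(w,v). -/
open MvPolynomial

noncomputable section

/-! Peel off the last letters of `v` and `w` with rules (2)-(5): their right-hand sides are
symmetric in `(v, w)` by recursion, since rules (2)-(4) shorten the pair, and rule (5) keeps its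
length but moves the final zeros to the front, which lowers the number of trailing zeros. The
exception is a pair without ones: then `0·v = v·0`, so rule (5) reads
`(1 - q) p(v·0, w·0) = p(1·v, 1·w)` and one divides by `1 - q`. -/

theorem List.rtakeWhile_cons_of_exists_not {α : Type*} {p : α → Bool} {x : α} {l : List α}
    (h : ∃ y ∈ x :: l, ¬p y) : (x :: l).rtakeWhile p = l.rtakeWhile p := by
  induction l using List.reverseRecOn with
  | nil => simpa using h
  | append_singleton l y ih =>
    rw [← List.cons_append, List.rtakeWhile_concat, List.rtakeWhile_concat]
    split_ifs with hy
    · rw [ih]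
      obtain ⟨z, hz, hpz⟩ := h
      have hzy : z ≠ y := by rintro rfl; exact hpz hy
      exact ⟨z, by simpa [hzy] using hz, hpz⟩
    · rfl

def trailingFalses (v : List Bool) : ℕ := (v.rtakeWhile not).length

theorem trailingFalses_concat_false (v : List Bool) :
    trailingFalses (v ++ [false]) = trailingFalses v + 1 := by
  simp [trailingFalses]

theorem trailingFalses_cons_true (v : List Bool) :
    trailingFalses (true :: v) = trailingFalses v := by
  rw [trailingFalses, trailingFalses,
    List.rtakeWhile_cons_of_exists_not ⟨true, List.mem_cons_self, by simp⟩]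

theorem trailingFalses_cons_of_true_mem (x : Bool) {v : List Bool} (hv : true ∈ v) :
    trailingFalses (x :: v) = trailingFalses v := by
  rw [trailingFalses, trailingFalses,
    List.rtakeWhile_cons_of_exists_not ⟨true, List.mem_cons_of_mem _ hv, by simp⟩]

@[simp]
theorem onesCt_concat_true (v : List Bool) : onesCt (v ++ [true]) = onesCt v + 1 := by
  simp [onesCt]

@[simp]
theorem onesCt_concat_false (v : List Bool) : onesCt (v ++ [false]) = onesCt v := by
  simp [onesCt]

@[simp]
theorem onesCt_cons_true (v : List Bool) : onesCt (true :: v) = onesCt v + 1 := by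
  simp [onesCt]

@[simp]
theorem onesCt_cons_false (v : List Bool) : onesCt (false :: v) = onesCt v := by
  simp [onesCt]

theorem onesCt_eq_zero_iff {v : List Bool} :
    onesCt v = 0 ↔ ∃ m, v = List.replicate m false := by
  simp [onesCt, List.count_eq_zero, List.eq_replicate_iff]

theorem onesCt_pos_iff {v : List Bool} : 0 < onesCt v ↔ true ∈ v := List.count_pos_iff

namespace IsPFamily

variable {p : List Bool → List Bool → KRF}

theorem symm_nil_left (hp : IsPFamily p) {w : List Bool} (hw : onesCt w = 0) :
    p [] w = p w [] := by
  obtain ⟨n, rfl⟩ := onesCt_eq_zero_iff.mp hw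
  rw [hp.1, hp.2.1]

theorem symm_concat_true_true (hp : IsPFamily p) {v w : List Bool} (h : onesCt v = onesCt w)
    (hvw : p v w = p w v) : p (v ++ [true]) (w ++ [true]) = p (w ++ [true]) (v ++ [true]) := by
  rw [hp.2.2.1 v w h, hp.2.2.1 w v h.symm, h, hvw]

theorem symm_concat_true_false (hp : IsPFamily p) {v w : List Bool} (h : onesCt v + 1 = onesCt w)
    (hvw : p (true :: v) w = p w (true :: v)) :
    p (v ++ [true]) (w ++ [false]) = p (w ++ [false]) (v ++ [true]) := by
  rw [hp.2.2.2.2.1 v w h, hp.2.2.2.1 w v h.symm, hvw]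

theorem symm_concat_false_false (hp : IsPFamily p) {v w : List Bool} (h : onesCt v = onesCt w)
    (h₁ : p (true :: v) (true :: w) = p (true :: w) (true :: v))
    (h₀ : p (false :: v) (false :: w) = p (false :: w) (false :: v)) :
    p (v ++ [false]) (w ++ [false]) = p (w ++ [false]) (v ++ [false]) := by
  rw [hp.2.2.2.2.2 v w h, hp.2.2.2.2.2 w v h.symm, h, h₁, h₀]

theorem one_sub_fq_mul_replicate_succ (hp : IsPFamily p) (m n : ℕ) :
    (1 - fq) * p (List.replicate (m + 1) false) (List.replicate (n + 1) false) =
      p (true :: List.replicate m false) (true :: List.replicate n false) := by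
  have h := hp.2.2.2.2.2 (List.replicate m false) (List.replicate n false)
    (by simp [onesCt, List.count_replicate])
  simp only [onesCt, List.count_replicate, CharP.cast_eq_zero, neg_zero, zpow_zero, one_mul,
    mul_one, ← List.replicate_succ', ← List.replicate_succ] at h
  linear_combination h

theorem symm_replicate_succ (hp : IsPFamily p) (m n : ℕ)
    (h : p (true :: List.replicate m false) (true :: List.replicate n false) =
      p (true :: List.replicate n false) (true :: List.replicate m false)) :
    p (List.replicate (m + 1) false) (List.replicate (n + 1) false) =
      p (List.replicate (n + 1) false) (List.replicate (m + 1) false) := by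
  refine mul_left_cancel₀ one_sub_fq_ne_zero ?_
  rw [hp.one_sub_fq_mul_replicate_succ, hp.one_sub_fq_mul_replicate_succ, h]

theorem symm (hp : IsPFamily p) {v w : List Bool} (h : onesCt v = onesCt w) :
    p v w = p w v := by
  rcases v.eq_nil_or_concat' with rfl | ⟨v, x, rfl⟩
  · exact hp.symm_nil_left h.symm
  rcases w.eq_nil_or_concat' with rfl | ⟨w, y, rfl⟩
  · exact (hp.symm_nil_left h).symm
  cases x <;> cases y <;> simp only [onesCt_concat_true, onesCt_concat_false] at h
  · rcases Nat.eq_zero_or_pos (onesCt v) with hv | hv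
    · obtain ⟨n, rfl⟩ := onesCt_eq_zero_iff.mp (h ▸ hv)
      obtain ⟨m, rfl⟩ := onesCt_eq_zero_iff.mp hv
      simp only [← List.replicate_succ']
      exact hp.symm_replicate_succ m n (hp.symm (by simp [onesCt, List.count_replicate]))
    · -- `decreasing_by` needs `hv₁`, `hw₁`: then `0·v` has fewer trailing zeros than `v·0`
      have hv₁ : true ∈ v := onesCt_pos_iff.mp hv
      have hw₁ : true ∈ w := onesCt_pos_iff.mp (h ▸ hv)
      exact hp.symm_concat_false_false h (hp.symm (by simpa using h)) (hp.symm (by simpa using h))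
  · exact (hp.symm_concat_true_false h.symm (hp.symm (by simpa using h.symm))).symm
  · exact hp.symm_concat_true_false h (hp.symm (by simpa using h))
  · exact hp.symm_concat_true_true (by simpa using h) (hp.symm (by simpa using h))
termination_by (v.length + w.length, trailingFalses v + trailingFalses w)
decreasing_by
  all_goals
    subst_vars
    simp only [Prod.lex_def, List.length_append, List.length_cons, trailingFalses_concat_false,
      trailingFalses_cons_true]
    try simp (disch := assumption) only [trailingFalses_cons_of_true_mem]
    omega

end IsPFamily

/-- The p-family is symmetric: `p(v,w) = p(w,v)` for every balanced pair. -/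
theorem pFamily_symm (p : List Bool → List Bool → KRF) (hp : IsPFamily p)
    (v w : List Bool) (hvw : onesCt v = onesCt w) :
    p v w = p w v :=
  hp.symm hvw
end
end
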